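/- Let S be a nonempty countable family of linear orders. Then the ordered sum Ξ(S) + Ξ(S) of two copies of Ξ(S) is order isomorphic to Ξ(S). -/

import Mathlib

/-- A coloring `χ : L → ι` of a linear order `L` is *dense* if for every color `i`
and all `x < x'` in `L` there is `y` with `x < y < x'` and `χ y = i`. -/
def DenseColoring {L : Type*} [LinearOrder L] {ι : Type*} (χ : L → ι) : Prop :=
  ∀ i : ι, ∀ x x' : L, x < x' → ∃ y : L, x < y ∧ y < x' ∧ χ y = i

noncomputable section ShuffleAux

namespace ShuffleAux

open Order Sum

variable {ι α β : Type*} [LinearOrder α] [LinearOrder β]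

theorem exists_between_finsets_col [DenselyOrdered β] [NoMinOrder β] [NoMaxOrder β] [Nonempty β]
    {χ : β → ι} (hχ : DenseColoring χ) (i : ι) (lo hi : Finset β)
    (lo_lt_hi : ∀ x ∈ lo, ∀ y ∈ hi, x < y) :
    ∃ m : β, χ m = i ∧ (∀ x ∈ lo, x < m) ∧ ∀ y ∈ hi, m < y := by
  obtain ⟨u, hu1, hu2⟩ := Order.exists_between_finsets lo hi lo_lt_hi
  obtain ⟨v, hv1, hv2⟩ := Order.exists_between_finsets {u} hi (by
    intro x hx y hy
    rw [Finset.mem_singleton] at hx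
    subst hx
    exact hu2 y hy)
  have huv : u < v := hv1 u (Finset.mem_singleton_self u)
  obtain ⟨m, hm1, hm2, hm3⟩ := hχ i u v huv
  exact ⟨m, hm3, fun x hx => (hu1 x hx).trans hm1, fun y hy => hm2.trans (hv2 y hy)⟩

variable (χa : α → ι) (χb : β → ι)

/-- Color-preserving partial isomorphisms. -/
def CPI : Type _ :=
  { f : Finset (α × β) //
      (∀ p ∈ f, χa p.1 = χb p.2) ∧
      ∀ p ∈ f, ∀ q ∈ f, cmp (Prod.fst p) (Prod.fst q) = cmp (Prod.snd p) (Prod.snd q) }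

namespace CPI

instance : Inhabited (CPI χa χb) :=
  ⟨⟨∅, fun _p h => (Finset.notMem_empty _ h).elim,
      fun _p h _q _ => (Finset.notMem_empty _ h).elim⟩⟩

instance : Preorder (CPI χa χb) := Subtype.preorder _

variable {χa χb}

theorem exists_across [DenselyOrdered β] [NoMinOrder β] [NoMaxOrder β] [Nonempty β]
    (hχb : DenseColoring χb) (f : CPI χa χb) (a : α) :
    ∃ b : β, χb b = χa a ∧ ∀ p ∈ f.val, cmp (Prod.fst p) a = cmp (Prod.snd p) b := by
  by_cases h : ∃ b, (a, b) ∈ f.val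
  · obtain ⟨b, hb⟩ := h
    exact ⟨b, (f.prop.1 _ hb).symm, fun p hp => f.prop.2 _ hp _ hb⟩
  have :
    ∀ x ∈ (f.val.filter fun p : α × β => p.fst < a).image Prod.snd,
      ∀ y ∈ (f.val.filter fun p : α × β => a < p.fst).image Prod.snd, x < y := by
    intro x hx y hy
    rw [Finset.mem_image] at hx hy
    rcases hx with ⟨p, hp1, rfl⟩
    rcases hy with ⟨q, hq1, rfl⟩
    rw [Finset.mem_filter] at hp1 hq1
    rw [← lt_iff_lt_of_cmp_eq_cmp (f.prop.2 _ hp1.1 _ hq1.1)]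
    exact lt_trans hp1.right hq1.right
  obtain ⟨b, hbcol, hb⟩ := exists_between_finsets_col hχb (χa a) _ _ this
  refine ⟨b, hbcol, ?_⟩
  rintro ⟨p1, p2⟩ hp
  have hne : p1 ≠ a := fun he => h ⟨p2, he ▸ hp⟩
  cases' lt_or_gt_of_ne hne with hl hr
  · have : p1 < a ∧ p2 < b :=
      ⟨hl, hb.1 _ (Finset.mem_image.mpr ⟨(p1, p2), Finset.mem_filter.mpr ⟨hp, hl⟩, rfl⟩)⟩
    rw [← cmp_eq_lt_iff, ← cmp_eq_lt_iff] at this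
    exact this.1.trans this.2.symm
  · have : a < p1 ∧ b < p2 :=
      ⟨hr, hb.2 _ (Finset.mem_image.mpr ⟨(p1, p2), Finset.mem_filter.mpr ⟨hp, hr⟩, rfl⟩)⟩
    rw [← cmp_eq_gt_iff, ← cmp_eq_gt_iff] at this
    exact this.1.trans this.2.symm

/-- Symmetry of colored partial isomorphisms. -/
protected def comm (f : CPI χa χb) : CPI χb χa :=
  ⟨f.val.image (Equiv.prodComm α β), by
    constructor
    · intro p hp
      rw [Finset.mem_image] at hp
      obtain ⟨q, hq, rfl⟩ := hp
      exact (f.prop.1 q hq).symm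
    · intro p hp q hq
      rw [Finset.mem_image] at hp hq
      obtain ⟨p', hp', rfl⟩ := hp
      obtain ⟨q', hq', rfl⟩ := hq
      exact (f.prop.2 p' hp' q' hq').symm⟩

theorem comm_val (f : CPI χa χb) : (CPI.comm f).val = f.val.image (Equiv.prodComm α β) := rfl

/-- The cofinal set of colored partial isomorphisms defined at `a : α`. -/
def definedAtLeft [DenselyOrdered β] [NoMinOrder β] [NoMaxOrder β] [Nonempty β]
    (hχb : DenseColoring χb) (a : α) : Cofinal (CPI χa χb) where
  carrier := {f | ∃ b : β, (a, b) ∈ f.val}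
  isCofinal f := by
    obtain ⟨b, hbcol, a_b⟩ := exists_across hχb f a
    refine
      ⟨⟨insert (a, b) f.val, ?_, ?_⟩, ⟨b, Finset.mem_insert_self _ _⟩,
        Finset.subset_insert _ _⟩
    · intro p hp
      rw [Finset.mem_insert] at hp
      rcases hp with rfl | hp
      · exact hbcol.symm
      · exact f.prop.1 _ hp
    · intro p hp q hq
      rw [Finset.mem_insert] at hp hq
      rcases hp with (rfl | pf) <;> rcases hq with (rfl | qf)
      · simp only [cmp_self_eq_eq]
      · rw [cmp_eq_cmp_symm]
        exact a_b _ qf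
      · exact a_b _ pf
      · exact f.prop.2 _ pf _ qf

/-- The cofinal set of colored partial isomorphisms defined at `b : β`. -/
def definedAtRight [DenselyOrdered α] [NoMinOrder α] [NoMaxOrder α] [Nonempty α]
    (hχa : DenseColoring χa) (b : β) : Cofinal (CPI χa χb) where
  carrier := {f | ∃ a, (a, b) ∈ f.val}
  isCofinal f := by
    rcases (definedAtLeft hχa b).isCofinal f.comm with ⟨f', ⟨a, ha⟩, hl⟩
    refine ⟨f'.comm, ⟨a, ?_⟩, ?_⟩
    · exact Finset.mem_image_of_mem _ ha
    · intro p hp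
      have h1 : (Equiv.prodComm α β) p ∈ f'.val := hl (Finset.mem_image_of_mem _ hp)
      show p ∈ f'.val.image (⇑(Equiv.prodComm β α))
      refine Finset.mem_image.mpr ⟨Equiv.prodComm α β p, h1, ?_⟩
      simp

def funOfIdeal [DenselyOrdered β] [NoMinOrder β] [NoMaxOrder β] [Nonempty β]
    (hχb : DenseColoring χb) (a : α) (I : Ideal (CPI χa χb)) :
    (∃ f, f ∈ definedAtLeft hχb a ∧ f ∈ I) → { b // ∃ f ∈ I, (a, b) ∈ Subtype.val f } :=
  Classical.indefiniteDescription _ ∘ fun ⟨f, ⟨b, hb⟩, hf⟩ => ⟨b, f, hf, hb⟩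

def invOfIdeal [DenselyOrdered α] [NoMinOrder α] [NoMaxOrder α] [Nonempty α]
    (hχa : DenseColoring χa) (b : β) (I : Ideal (CPI χa χb)) :
    (∃ f, f ∈ definedAtRight hχa b ∧ f ∈ I) → { a // ∃ f ∈ I, (a, b) ∈ Subtype.val f } :=
  Classical.indefiniteDescription _ ∘ fun ⟨f, ⟨a, ha⟩, hf⟩ => ⟨a, f, hf, ha⟩

end CPI

open CPI

/-- Colored back-and-forth: any two countable dense unbounded linear orders with dense
`ι`-colorings are isomorphic by a color-preserving order isomorphism. -/
theorem iso_colored [Countable α] [DenselyOrdered α] [NoMinOrder α] [NoMaxOrder α] [Nonempty α]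
    [Countable β] [DenselyOrdered β] [NoMinOrder β] [NoMaxOrder β] [Nonempty β]
    (hχa : DenseColoring χa) (hχb : DenseColoring χb) :
    ∃ e : α ≃o β, ∀ a, χb (e a) = χa a := by
  cases nonempty_encodable (α ⊕ β)
  let to_cofinal : α ⊕ β → Cofinal (CPI χa χb) := fun p =>
    Sum.recOn p (definedAtLeft hχb) (definedAtRight hχa)
  let our_ideal : Ideal (CPI χa χb) := idealOfCofinals default to_cofinal
  let F := fun a => funOfIdeal hχb a our_ideal (cofinal_meets_idealOfCofinals _ to_cofinal (Sum.inl a))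
  let G := fun b => invOfIdeal hχa b our_ideal (cofinal_meets_idealOfCofinals _ to_cofinal (Sum.inr b))
  refine ⟨OrderIso.ofCmpEqCmp (fun a => (F a).val) (fun b => (G b).val) fun a b => ?_, fun a => ?_⟩
  · rcases (F a).prop with ⟨f, hf, ha⟩
    rcases (G b).prop with ⟨g, hg, hb⟩
    rcases our_ideal.directed _ hf _ hg with ⟨m, _, fm, gm⟩
    exact m.prop.2 (a, _) (fm ha) (_, b) (gm hb)
  · rcases (F a).prop with ⟨f, _, ha⟩
    exact (f.prop.1 (a, (F a).val) ha).symm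

variable {F : ι → Type*} [∀ i, LinearOrder (F i)]

/-- Cast between fibers along an equality of colors. -/
def castIso (h : i = j) : F i ≃o F j := by subst h; exact OrderIso.refl (F i)

/-- Reindexing a lexicographic sum along a color-preserving order isomorphism. -/
def sigmaLexCongr (e : α ≃o β) (h : ∀ a, χb (e a) = χa a) :
    (Σₗ a : α, F (χa a)) ≃o (Σₗ b : β, F (χb b)) := by
  let f : (Σₗ a : α, F (χa a)) → (Σₗ b : β, F (χb b)) :=
    fun p => toLex ⟨e (ofLex p).1, (castIso (F := F) (h (ofLex p).1).symm) (ofLex p).2⟩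
  have hmono : StrictMono f := by
    intro p q hpq
    rcases Sigma.Lex.lt_def.mp hpq with hlt | ⟨heq, hlt⟩
    · exact Sigma.Lex.lt_def.mpr (Or.inl (e.strictMono hlt))
    · obtain ⟨a, x⟩ := p
      obtain ⟨a', x'⟩ := q
      dsimp only at heq
      subst heq
      exact Sigma.Lex.lt_def.mpr
        (Or.inr ⟨rfl, (castIso (F := F) (h a).symm).strictMono hlt⟩)
  have hsurj : Function.Surjective f := by
    rintro ⟨b, y⟩
    obtain ⟨a, rfl⟩ := e.surjective b
    exact ⟨toLex ⟨a, (castIso (F := F) (h a).symm).symm y⟩, by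
      show toLex (⟨e a, _⟩ : Σ b : β, F (χb b)) = toLex ⟨e a, y⟩
      congr 1
      exact congrArg (Sigma.mk (e a)) (OrderIso.apply_symm_apply _ y)⟩
  exact (hmono.orderIsoOfSurjective f hsurj)

end ShuffleAux

end ShuffleAux

/-- For a nonempty countable family of linear orders, `Ξ(S) + Ξ(S) ≅ Ξ(S)`. -/
theorem shuffle_add_self {ι : Type*} [Nonempty ι] [Countable ι]
    (F : ι → Type*) [∀ i, LinearOrder (F i)]
    (χ : ℚ → ι) (hχ : DenseColoring χ) :
    Nonempty (((Σₗ q : ℚ, F (χ q)) ⊕ₗ (Σₗ q : ℚ, F (χ q))) ≃o (Σₗ q : ℚ, F (χ q))) := by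
  classical
  haveI : Countable (ℚ ⊕ₗ ℚ) := inferInstanceAs (Countable (ℚ ⊕ ℚ))
  -- the induced coloring on `ℚ ⊕ₗ ℚ`
  set χ' : ℚ ⊕ₗ ℚ → ι := fun p => Sum.elim χ χ (ofLex p) with hχ'def
  have hχ' : DenseColoring χ' := by
    intro i p p' hpp'
    obtain a | a := p <;> obtain b | b := p'
    · have hab : a < b := Sum.lex_inl_inl.mp hpp'
      obtain ⟨y, h1, h2, h3⟩ := hχ i a b hab
      exact ⟨toLex (Sum.inl y), Sum.Lex.inl h1, Sum.Lex.inl h2, h3⟩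
    · obtain ⟨y, h1, _, h3⟩ := hχ i a (a + 1) (by linarith)
      exact ⟨toLex (Sum.inl y), Sum.Lex.inl h1, Sum.Lex.sep _ _, h3⟩
    · exact absurd hpp' Sum.lex_inr_inl
    · have hab : a < b := Sum.lex_inr_inr.mp hpp'
      obtain ⟨y, h1, h2, h3⟩ := hχ i a b hab
      exact ⟨toLex (Sum.inr y), Sum.Lex.inr h1, Sum.Lex.inr h2, h3⟩
  -- color-preserving iso from `ℚ ⊕ₗ ℚ` to `ℚ`
  obtain ⟨e, he⟩ := ShuffleAux.iso_colored χ' χ hχ' hχ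
  -- the first iso: sum of two sigma sums ≅ sigma sum over the lex sum
  let g : ((Σₗ q : ℚ, F (χ q)) ⊕ₗ (Σₗ q : ℚ, F (χ q))) → (Σₗ p : ℚ ⊕ₗ ℚ, F (χ' p)) :=
    fun x =>
      Sum.elim
        (fun s => toLex ⟨toLex (Sum.inl (ofLex s).1), (ofLex s).2⟩)
        (fun s => toLex ⟨toLex (Sum.inr (ofLex s).1), (ofLex s).2⟩)
        (ofLex x)
  have hgmono : StrictMono g := by
    intro x y hxy
    obtain s | s := x <;> obtain t | t := y
    · have h : Sigma.Lex (· < ·) (fun _ => (· < ·)) s t := Sum.lex_inl_inl.mp hxy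
      rcases Sigma.Lex.lt_def.mp h with hq | ⟨heq, hlt⟩
      · exact Sigma.Lex.lt_def.mpr (Or.inl (Sum.Lex.inl hq))
      · obtain ⟨a, u⟩ := s
        obtain ⟨b, v⟩ := t
        dsimp only at heq
        subst heq
        exact Sigma.Lex.lt_def.mpr (Or.inr ⟨rfl, hlt⟩)
    · exact Sigma.Lex.lt_def.mpr (Or.inl (Sum.Lex.sep _ _))
    · exact absurd hxy Sum.lex_inr_inl
    · have h : Sigma.Lex (· < ·) (fun _ => (· < ·)) s t := Sum.lex_inr_inr.mp hxy
      rcases Sigma.Lex.lt_def.mp h with hq | ⟨heq, hlt⟩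
      · exact Sigma.Lex.lt_def.mpr (Or.inl (Sum.Lex.inr hq))
      · obtain ⟨a, u⟩ := s
        obtain ⟨b, v⟩ := t
        dsimp only at heq
        subst heq
        exact Sigma.Lex.lt_def.mpr (Or.inr ⟨rfl, hlt⟩)
  have hgsurj : Function.Surjective g := by
    rintro ⟨p, y⟩
    obtain q | q := p
    · exact ⟨toLex (Sum.inl (toLex ⟨q, y⟩)), rfl⟩
    · exact ⟨toLex (Sum.inr (toLex ⟨q, y⟩)), rfl⟩
  exact ⟨(hgmono.orderIsoOfSurjective g hgsurj).trans
      (ShuffleAux.sigmaLexCongr χ' χ e he)⟩
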